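/- Fix β = 3/2, T₀ > 0 and C > 0, and set M = 2CT₀ e^{CT₀}. Choose ε₀ > 0 such that ε₀^{β−1} M² + ε₀^{2β−2} M³ ≤ 1. Then for every ε ∈ (0,ε₀) the following holds: if Z : [0, T₀/ε²] → [0,∞) is continuous with Z(0) = 0 and satisfies Z(t) ≤ C ε² ∫₀^t ( Z(τ) + ε^{β−1} Z(τ)² + ε^{2β−2} Z(τ)³ + 1 ) dτ for every t ∈ [0, T₀/ε²] such that ε^{β−1} Z(τ)² + ε^{2β−2} Z(τ)³ ≤ 1 for all τ ∈ [0,t], then Z(t) ≤ M for all t ∈ [0, T₀/ε²]. -/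
import Mathlib


open Set

private lemma exp_sub_one_le_self_mul_exp {x : ℝ} (hx : 0 ≤ x) :
    Real.exp x - 1 ≤ x * Real.exp x := by
  have h := Real.add_one_le_exp (-x)
  have hmul : Real.exp (-x) * Real.exp x = 1 := by
    rw [← Real.exp_add]; simp
  nlinarith [mul_le_mul_of_nonneg_right h (Real.exp_pos x).le]

/-- The Gronwall-type bootstrap argument of the error estimates: with `β = 3/2`,
`M = 2CT₀e^{CT₀}` and `ε₀` chosen with `ε₀^{β−1}M² + ε₀^{2β−2}M³ ≤ 1`, any continuous
`Z : [0,T₀/ε²] → [0,∞)` with `Z(0) = 0` satisfying the integral inequality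
`Z(t) ≤ Cε² ∫₀ᵗ (Z + ε^{β−1}Z² + ε^{2β−2}Z³ + 1)` for all `t` up to which the bootstrap
condition `ε^{β−1}Z² + ε^{2β−2}Z³ ≤ 1` holds, is bounded by `M` on all of `[0,T₀/ε²]`. -/
theorem gronwall_bootstrap (β T₀ C M ε₀ : ℝ) (hβ : β = 3 / 2) (hT₀ : 0 < T₀) (hC : 0 < C)
    (hM : M = 2 * C * T₀ * Real.exp (C * T₀)) (hε₀ : 0 < ε₀)
    (hε₀M : ε₀ ^ (β - 1) * M ^ 2 + ε₀ ^ (2 * β - 2) * M ^ 3 ≤ 1) :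
    ∀ ε : ℝ, 0 < ε → ε < ε₀ →
      ∀ Z : ℝ → ℝ, ContinuousOn Z (Icc 0 (T₀ / ε ^ 2)) →
        (∀ t ∈ Icc (0 : ℝ) (T₀ / ε ^ 2), 0 ≤ Z t) →
        Z 0 = 0 →
        (∀ t ∈ Icc (0 : ℝ) (T₀ / ε ^ 2),
          (∀ τ ∈ Icc (0 : ℝ) t, ε ^ (β - 1) * Z τ ^ 2 + ε ^ (2 * β - 2) * Z τ ^ 3 ≤ 1) →
          Z t ≤ C * ε ^ 2 *
            ∫ τ in (0 : ℝ)..t,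
              (Z τ + ε ^ (β - 1) * Z τ ^ 2 + ε ^ (2 * β - 2) * Z τ ^ 3 + 1)) →
        ∀ t ∈ Icc (0 : ℝ) (T₀ / ε ^ 2), Z t ≤ M := by
  intro ε hε hεε₀ Z hZc hZnn hZ0 hZint
  set T : ℝ := T₀ / ε ^ 2 with hTdef
  have hε2 : (0 : ℝ) < ε ^ 2 := by positivity
  have hT : 0 < T := div_pos hT₀ hε2
  have hεT : ε ^ 2 * T = T₀ := by
    rw [hTdef]; field_simp
  have hMpos : 0 < M := by rw [hM]; positivity
  have hapos : (0 : ℝ) < ε ^ (β - 1) := Real.rpow_pos_of_pos hε _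
  have hbpos : (0 : ℝ) < ε ^ (2 * β - 2) := Real.rpow_pos_of_pos hε _
  have haa : ε ^ (β - 1) < ε₀ ^ (β - 1) :=
    Real.rpow_lt_rpow hε.le hεε₀ (by rw [hβ]; norm_num)
  have hbb : ε ^ (2 * β - 2) ≤ ε₀ ^ (2 * β - 2) :=
    Real.rpow_le_rpow hε.le hεε₀.le (by rw [hβ]; norm_num)
  -- continuous extension of Z by clamping
  set W : ℝ → ℝ := fun s => Z (max 0 (min s T)) with hWdef
  have hmem : ∀ s : ℝ, max 0 (min s T) ∈ Icc (0 : ℝ) T := fun s =>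
    ⟨le_max_left _ _, max_le hT.le (min_le_right _ _)⟩
  have hWcont : Continuous W :=
    hZc.comp_continuous (continuous_const.max (continuous_id.min continuous_const)) hmem
  have hWeq : ∀ s ∈ Icc (0 : ℝ) T, W s = Z s := by
    intro s hs
    have : max 0 (min s T) = s := by rw [min_eq_left hs.2, max_eq_right hs.1]
    simp only [hWdef, this]
  have hWnn : ∀ s, 0 ≤ W s := fun s => hZnn _ (hmem s)
  set G : ℝ → ℝ := fun s => ∫ τ in (0 : ℝ)..s, (W τ + 2) with hGdef
  have hG' : ∀ s, HasDerivAt G (W s + 2) s := fun s =>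
    ((hWcont.add continuous_const).integral_hasStrictDerivAt 0 s).hasDerivAt
  have hGcont : Continuous G := by
    rw [continuous_iff_continuousAt]; exact fun s => (hG' s).continuousAt
  have hG0 : G 0 = 0 := intervalIntegral.integral_same
  have hGnn : ∀ s, 0 ≤ s → 0 ≤ G s := fun s hs =>
    intervalIntegral.integral_nonneg hs (fun u _ => by linarith [hWnn u])
  set K : ℝ := C * ε ^ 2 with hK
  have hKpos : 0 < K := by positivity
  -- the key Gronwall estimate
  have key : ∀ t ∈ Icc (0 : ℝ) T,
      (∀ τ ∈ Icc (0 : ℝ) t, ε ^ (β - 1) * Z τ ^ 2 + ε ^ (2 * β - 2) * Z τ ^ 3 ≤ 1) →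
      ∀ τ ∈ Icc (0 : ℝ) t, Z τ ≤ M := by
    intro t ht hcond
    have hsubT : Icc (0 : ℝ) t ⊆ Icc 0 T := Icc_subset_Icc le_rfl ht.2
    have step1 : ∀ s ∈ Icc (0 : ℝ) t, Z s ≤ K * G s := by
      intro s hs
      have hsT : s ∈ Icc (0 : ℝ) T := hsubT hs
      have h1 := hZint s hsT (fun τ hτ => hcond τ ⟨hτ.1, hτ.2.trans hs.2⟩)
      refine h1.trans ?_
      rw [hK]
      apply mul_le_mul_of_nonneg_left _ (by positivity)
      have hZcs : ContinuousOn Z (Icc (0 : ℝ) s) := hZc.mono (Icc_subset_Icc le_rfl hsT.2)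
      have hint1 : IntervalIntegrable
          (fun τ => Z τ + ε ^ (β - 1) * Z τ ^ 2 + ε ^ (2 * β - 2) * Z τ ^ 3 + 1)
          MeasureTheory.volume 0 s := by
        apply ContinuousOn.intervalIntegrable
        rw [uIcc_of_le hs.1]
        exact ((hZcs.add (continuousOn_const.mul (hZcs.pow 2))).add
          (continuousOn_const.mul (hZcs.pow 3))).add continuousOn_const
      have hint2 : IntervalIntegrable (fun τ => W τ + 2) MeasureTheory.volume 0 s :=
        (hWcont.add continuous_const).intervalIntegrable _ _
      apply intervalIntegral.integral_mono_on hs.1 hint1 hint2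
      intro τ hτ
      have hτt : τ ∈ Icc (0 : ℝ) t := ⟨hτ.1, hτ.2.trans hs.2⟩
      have hc := hcond τ hτt
      rw [hWeq τ (hsubT hτt)]
      linarith
    have gronbound : ∀ x ∈ Ico (0 : ℝ) t, ‖W x + 2‖ ≤ K * ‖G x‖ + 2 := by
      intro x hx
      have hx' : x ∈ Icc (0 : ℝ) t := ⟨hx.1, hx.2.le⟩
      rw [Real.norm_of_nonneg (by linarith [hWnn x] : (0 : ℝ) ≤ W x + 2),
        Real.norm_of_nonneg (hGnn x hx.1), hWeq x (hsubT hx')]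
      linarith [step1 x hx']
    have gron := norm_le_gronwallBound_of_norm_deriv_right_le (δ := 0)
      hGcont.continuousOn (fun s _ => (hG' s).hasDerivWithinAt)
      (by simp [hG0]) gronbound
    intro τ hτ
    have hGτ : G τ ≤ 2 / K * (Real.exp (K * τ) - 1) := by
      have h := gron τ hτ
      rw [Real.norm_of_nonneg (hGnn τ hτ.1), gronwallBound_of_K_ne_0 hKpos.ne'] at h
      simpa using h
    have h2 : Z τ ≤ K * G τ := step1 τ hτ
    have h3 : K * (2 / K * (Real.exp (K * τ) - 1)) = 2 * (Real.exp (K * τ) - 1) := by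
      field_simp
    have h4 : Real.exp (K * τ) - 1 ≤ K * τ * Real.exp (K * τ) :=
      exp_sub_one_le_self_mul_exp (mul_nonneg hKpos.le hτ.1)
    have h5 : K * τ ≤ C * T₀ := by
      rw [hK, ← hεT]
      have hτT : τ ≤ T := hτ.2.trans ht.2
      nlinarith
    have h6 : Real.exp (K * τ) ≤ Real.exp (C * T₀) := Real.exp_le_exp.2 h5
    have h7 : K * τ * Real.exp (K * τ) ≤ C * T₀ * Real.exp (C * T₀) := by
      apply mul_le_mul h5 h6 (Real.exp_pos _).le (by positivity)
    have h8 : K * G τ ≤ 2 * (Real.exp (K * τ) - 1) := by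
      calc K * G τ ≤ K * (2 / K * (Real.exp (K * τ) - 1)) :=
            mul_le_mul_of_nonneg_left hGτ hKpos.le
        _ = 2 * (Real.exp (K * τ) - 1) := h3
    rw [hM]
    linarith
  -- bootstrap via sSup
  set F : ℝ → ℝ := fun τ => ε ^ (β - 1) * Z τ ^ 2 + ε ^ (2 * β - 2) * Z τ ^ 3 with hFdef
  have hFcont : ContinuousOn F (Icc 0 T) :=
    (continuousOn_const.mul (hZc.pow 2)).add (continuousOn_const.mul (hZc.pow 3))
  set A : Set ℝ := {u : ℝ | u ∈ Icc (0 : ℝ) T ∧ ∀ τ ∈ Icc (0 : ℝ) u, F τ ≤ 1} with hAdef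
  have h0A : (0 : ℝ) ∈ A := by
    refine ⟨⟨le_rfl, hT.le⟩, ?_⟩
    intro τ hτ
    have hτ0 : τ = 0 := le_antisymm hτ.2 hτ.1
    simp [hFdef, hτ0, hZ0]
  have hAbdd : BddAbove A := ⟨T, fun u hu => hu.1.2⟩
  have hAne : A.Nonempty := ⟨0, h0A⟩
  set s₀ : ℝ := sSup A with hs₀def
  have hs₀0 : 0 ≤ s₀ := le_csSup hAbdd h0A
  have hs₀T : s₀ ≤ T := csSup_le hAne (fun u hu => hu.1.2)
  have hcond_lt : ∀ τ : ℝ, 0 ≤ τ → τ < s₀ → F τ ≤ 1 := by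
    intro τ h0τ hτs
    obtain ⟨u, huA, hτu⟩ := exists_lt_of_lt_csSup hAne hτs
    exact huA.2 τ ⟨h0τ, hτu.le⟩
  have hFs₀ : F s₀ ≤ 1 := by
    rcases eq_or_lt_of_le hs₀0 with h0 | h0
    · rw [← h0]
      simp [hFdef, hZ0]
    · have hsub : Ico (0 : ℝ) s₀ ⊆ Icc 0 T := fun x hx => ⟨hx.1, hx.2.le.trans hs₀T⟩
      have hcw : ContinuousWithinAt F (Ico 0 s₀) s₀ :=
        (hFcont s₀ ⟨hs₀0, hs₀T⟩).mono hsub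
      have hne : (nhdsWithin s₀ (Ico (0 : ℝ) s₀)).NeBot := by
        rw [← mem_closure_iff_nhdsWithin_neBot, closure_Ico h0.ne]
        exact ⟨hs₀0, le_rfl⟩
      exact le_of_tendsto hcw
        (Filter.eventually_of_mem self_mem_nhdsWithin
          (fun x hx => hcond_lt x hx.1 hx.2))
  have hs₀A : s₀ ∈ A :=
    ⟨⟨hs₀0, hs₀T⟩, fun τ hτ =>
      (lt_or_eq_of_le hτ.2).elim (hcond_lt τ hτ.1) (fun h => h ▸ hFs₀)⟩
  have hZM : ∀ τ ∈ Icc (0 : ℝ) s₀, Z τ ≤ M := key s₀ ⟨hs₀0, hs₀T⟩ hs₀A.2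
  have hstrict : ∀ τ ∈ Icc (0 : ℝ) s₀, F τ < 1 := by
    intro τ hτ
    have h1 : Z τ ≤ M := hZM τ hτ
    have h0 : 0 ≤ Z τ := hZnn τ ⟨hτ.1, hτ.2.trans hs₀T⟩
    have e2 : Z τ ^ 2 ≤ M ^ 2 := pow_le_pow_left₀ h0 h1 2
    have e3 : Z τ ^ 3 ≤ M ^ 3 := pow_le_pow_left₀ h0 h1 3
    have hM2 : (0 : ℝ) < M ^ 2 := by positivity
    have hM3 : (0 : ℝ) ≤ M ^ 3 := by positivity
    calc F τ ≤ ε ^ (β - 1) * M ^ 2 + ε ^ (2 * β - 2) * M ^ 3 :=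
          add_le_add (mul_le_mul_of_nonneg_left e2 hapos.le)
            (mul_le_mul_of_nonneg_left e3 hbpos.le)
      _ < ε₀ ^ (β - 1) * M ^ 2 + ε₀ ^ (2 * β - 2) * M ^ 3 := by
          have t1 : ε ^ (β - 1) * M ^ 2 < ε₀ ^ (β - 1) * M ^ 2 :=
            mul_lt_mul_of_pos_right haa hM2
          have t2 : ε ^ (2 * β - 2) * M ^ 3 ≤ ε₀ ^ (2 * β - 2) * M ^ 3 :=
            mul_le_mul_of_nonneg_right hbb hM3
          linarith
      _ ≤ 1 := hε₀M
  have hs₀eq : s₀ = T := by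
    by_contra hne'
    have hlt : s₀ < T := lt_of_le_of_ne hs₀T hne'
    have hcw : ContinuousWithinAt F (Icc 0 T) s₀ := hFcont s₀ ⟨hs₀0, hs₀T⟩
    have hev : ∀ᶠ x in nhdsWithin s₀ (Icc (0 : ℝ) T), F x < 1 :=
      Filter.Tendsto.eventually_lt_const (hstrict s₀ ⟨hs₀0, le_rfl⟩) hcw
    obtain ⟨δ, hδ, hball⟩ := Metric.mem_nhdsWithin_iff.1 hev
    set t₁ : ℝ := min T (s₀ + δ / 2) with ht₁def
    have ht₁s₀ : s₀ < t₁ := lt_min hlt (by linarith)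
    have ht₁A : t₁ ∈ A := by
      refine ⟨⟨hs₀0.trans ht₁s₀.le, min_le_left _ _⟩, ?_⟩
      intro τ hτ
      rcases le_or_gt τ s₀ with h | h
      · exact hs₀A.2 τ ⟨hτ.1, h⟩
      · have hτT : τ ∈ Icc (0 : ℝ) T := ⟨hτ.1, hτ.2.trans (min_le_left _ _)⟩
        have hτb : τ ∈ Metric.ball s₀ δ := by
          rw [Metric.mem_ball, Real.dist_eq, abs_of_pos (by linarith)]
          have : τ ≤ s₀ + δ / 2 := hτ.2.trans (min_le_right _ _)
          linarith
        exact (hball ⟨hτb, hτT⟩).le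
    exact absurd (le_csSup hAbdd ht₁A) (not_le.2 ht₁s₀)
  intro t ht
  exact key s₀ ⟨hs₀0, hs₀T⟩ hs₀A.2 t (by rw [hs₀eq]; exact ht)
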